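/- Matrix stability lemma: let n ≥ 1 and let A₁, A₂ be real symmetric n×n matrices such that A₁ is positive definite and every eigenvalue of the product A₁A₂ (as a complex matrix) has positive real part (i.e. A₁A₂ is positively stable). Then A₂ is positive definite. -/

import Mathlib

/-!
Write `A₁ = B * Bᴴ` with `B` invertible. Then `A₁ * A₂ = B * (Bᴴ * A₂)` has the same characteristic
polynomial as the Hermitian matrix `Bᴴ * A₂ * B`, whose eigenvalues are therefore real eigenvalues
of `A₁ * A₂`, hence positive. So `Bᴴ * A₂ * B` is positive definite, and so is its congruent `A₂`.
-/

open scoped ComplexOrder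

namespace Matrix

variable {n : Type*} [Fintype n] [DecidableEq n]

theorem mem_spectrum_map_iff {K L : Type*} [Field K] [Field L] (f : K →+* L)
    (A : Matrix n n K) (r : K) : f r ∈ spectrum L (A.map f) ↔ r ∈ spectrum K A := by
  simp only [mem_spectrum_iff_isRoot_charpoly, charpoly_map, Polynomial.isRoot_map_iff f.injective]

theorem spectrum_mul_comm {R K : Type*} [CommRing R] [Field K] [Algebra R K]
    (A B : Matrix n n K) : spectrum R (A * B) = spectrum R (B * A) := by
  have hK : spectrum K (A * B) = spectrum K (B * A) := by
    ext r
    simp only [mem_spectrum_iff_isRoot_charpoly, charpoly_mul_comm]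
  rw [← spectrum.preimage_algebraMap K, hK, spectrum.preimage_algebraMap]

variable {𝕜 : Type*} [RCLike 𝕜]

theorem IsHermitian.posDef_of_spectrum_pos {A : Matrix n n 𝕜} (hA : A.IsHermitian)
    (h : ∀ r ∈ spectrum ℝ A, 0 < r) : A.PosDef :=
  hA.posDef_iff_eigenvalues_pos.mpr fun i => h _ (hA.eigenvalues_mem_spectrum_real i)

theorem PosDef.posDef_of_spectrum_mul_pos {A₁ A₂ : Matrix n n 𝕜} (h₁ : A₁.PosDef)
    (h₂ : A₂.IsHermitian) (h : ∀ r ∈ spectrum ℝ (A₁ * A₂), 0 < r) : A₂.PosDef := by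
  open scoped MatrixOrder in
  obtain ⟨B, hB, rfl⟩ :=
    CStarAlgebra.isStrictlyPositive_iff_eq_mul_star_self.mp h₁.isStrictlyPositive
  have hspec : spectrum ℝ (B * star B * A₂) = spectrum ℝ (star B * A₂ * B) := by
    rw [mul_assoc, spectrum_mul_comm, mul_assoc]
  have hcongr : (star B * A₂ * B).PosDef :=
    (isHermitian_conjTranspose_mul_mul B h₂).posDef_of_spectrum_pos (hspec ▸ h)
  exact (IsUnit.posDef_star_left_conjugate_iff hB).mp hcongr

end Matrix

open Matrix in
theorem posDef_of_symm_posDef_mul_positively_stable_general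
    (n : ℕ)
    (A₁ A₂ : Matrix (Fin n) (Fin n) ℝ)
    (h₂symm : A₂.IsSymm)
    (h₁pd : A₁.PosDef)
    (hstable : ∀ μ : ℂ, μ ∈ spectrum ℂ ((A₁ * A₂).map (Complex.ofReal ·)) →
      0 < μ.re) :
    A₂.PosDef := by
  refine h₁pd.posDef_of_spectrum_mul_pos (isHermitian_iff_isSymm.mpr h₂symm) fun r hr => ?_
  simpa using hstable r ((mem_spectrum_map_iff Complex.ofRealHom _ r).mpr hr)

/-- **Matrix stability lemma:** if `A₁`, `A₂` are real symmetric matrices,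
`A₁` is positive definite, and every complex eigenvalue of the product `A₁A₂`
has positive real part (i.e. `A₁A₂` is positively stable), then `A₂` is
positive definite. -/
theorem posDef_of_symm_posDef_mul_positively_stable
    (n : ℕ) (hn : 1 ≤ n)
    (A₁ A₂ : Matrix (Fin n) (Fin n) ℝ)
    (h₁symm : A₁.IsSymm) (h₂symm : A₂.IsSymm)
    (h₁pd : A₁.PosDef)
    (hstable : ∀ μ : ℂ, μ ∈ spectrum ℂ ((A₁ * A₂).map (Complex.ofReal ·)) →
      0 < μ.re) :
    A₂.PosDef :=
  posDef_of_symm_posDef_mul_positively_stable_general n A₁ A₂ h₂symm h₁pd hstable
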